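/- Assume additionally that t ≠ 0 and t ≠ 1, and let q be any element of F. For every integer n ≥ 1, the Macdonald operator δ₁ = ∑_{i=1}^N A_i·∂_i^{(q)} applied to the power sum p_n = x_1^n + … + x_N^n (here ∂_i^{(q)} substitutes q·x_i for x_i, so that ∂_i^{(q)}(p_n) = p_n + (q^n − 1)·x_i^n) satisfies: ∑_{i=1}^N A_i · ( p_n + (q^n − 1)·x_i^n ) = ((1 − t^N)/(1 − t)) · p_n + ( t^N·(1 − q^n)/(t^n·(1 − t)) ) · F_n, where F_n is the coefficient of z^n in F(z) = ∏_{i=1}^N (1 − z·x_i)/(1 − t·z·x_i). -/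

import Mathlib

/-!
Write `P(z) = ∏ (1 - x_i z)` and `G(z) = ∏ (1 - t x_i z)`. Partial fractions give
`t^N (P - G) = ∑ (t - 1) A_i · t x_i z · ∏_{j ≠ i} (1 - t x_j z)`, so dividing by `G`,
`t^N F_n = (t - 1) tⁿ ∑ A_i x_iⁿ` for `n ≥ 1`. To avoid dividing by the `x_i` (one of them
may vanish), this is proved as an interpolation identity for polynomials in a new variable `W`
over `F⟦z⟧`, with nodes `t x_i z`, and then evaluated at `W = 1`.

The remaining input is `(t - 1) ∑ A_i = t^N - 1`. With `h = ∏ (Y - x_j)` and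
`D = (h(tY) - h(Y)) / Y` one has `D(x_i) = (t - 1) ∏_{j ≠ i} (t x_i - x_j)`, so by Lagrange
interpolation `(t - 1) ∑ A_i` is the coefficient of `Y^{N-1}` in `D`, which is `t^N - 1`.
-/

namespace Polynomial

variable {R : Type*} [CommRing R]

/-- `(p(tX) - p(X)) / X`, the Jackson `t`-derivative of `p` up to the factor `t - 1`. -/
noncomputable def jacksonDiff (t : R) (p : R[X]) : R[X] :=
  divX (p.comp (C t * X) - p)

theorem X_mul_jacksonDiff (t : R) (p : R[X]) :
    X * jacksonDiff t p = p.comp (C t * X) - p := by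
  have h := X_mul_divX_add (p.comp (C t * X) - p)
  rwa [coeff_sub, comp_C_mul_X_coeff, pow_zero, mul_one, sub_self, map_zero, add_zero] at h

theorem coeff_jacksonDiff (t : R) (p : R[X]) (n : ℕ) :
    (jacksonDiff t p).coeff n = (t ^ (n + 1) - 1) * p.coeff (n + 1) := by
  rw [jacksonDiff, coeff_divX, coeff_sub, comp_C_mul_X_coeff]
  ring

theorem eval_jacksonDiff_X_sub_C_mul (t a : R) (r : R[X]) :
    (jacksonDiff t ((X - C a) * r)).eval a = (t - 1) * r.eval (t * a) := by
  have h : jacksonDiff t ((X - C a) * r) = (C t * X - C a) * jacksonDiff t r + C (t - 1) * r := by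
    refine isRegular_X.left (?_ : X * _ = X * _)
    rw [X_mul_jacksonDiff, mul_add, mul_left_comm, X_mul_jacksonDiff]
    simp only [mul_comp, sub_comp, X_comp, C_comp, map_sub, map_one]
    ring
  have hr := congrArg (eval a) (X_mul_jacksonDiff t r)
  simp only [eval_mul, eval_X, eval_sub, eval_comp, eval_C] at hr
  rw [h]
  simp only [eval_add, eval_mul, eval_sub, eval_C, eval_X]
  linear_combination (t - 1) * hr

end Polynomial

open Finset in
noncomputable def macdonaldCoeff {F ι : Type*} [Field F] [DecidableEq ι] (s : Finset ι)
    (v : ι → F) (t : F) (i : ι) : F :=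
  ∏ j ∈ s.erase i, (t * v i - v j) / (v i - v j)

namespace Lagrange

open Polynomial Finset

variable {R ι : Type*} [CommRing R]

theorem degree_nodal_sub_nodal_lt [Nontrivial R] (s : Finset ι) (a b : ι → R) :
    (nodal s a - nodal s b).degree < #s := by
  rw [← degree_nodal (v := a)]
  exact degree_sub_lt_left (by rw [degree_nodal, degree_nodal]) nodal_ne_zero
    (by rw [nodal_monic.leadingCoeff, nodal_monic.leadingCoeff])

theorem eq_sum_C_mul_nodal_erase [IsDomain R] [DecidableEq ι] {s : Finset ι} {b : ι → R}
    (hb : Set.InjOn b s) {p : R[X]} (hp : p.degree < #s) {c : ι → R}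
    (hc : ∀ k ∈ s, c k * ∏ j ∈ s.erase k, (b k - b j) = p.eval (b k)) :
    p = ∑ i ∈ s, C (c i) * nodal (s.erase i) b := by
  refine eq_of_degree_sub_lt_of_eval_index_eq s hb ?_ fun k hk => ?_
  · rw [← mem_degreeLT] at hp ⊢
    refine Submodule.sub_mem _ hp (Submodule.sum_mem _ fun i hi => ?_)
    rw [C_mul']
    refine Submodule.smul_mem _ _ (mem_degreeLT.mpr ?_)
    rw [degree_nodal, card_erase_of_mem hi]
    exact_mod_cast Nat.sub_lt (card_pos.2 ⟨i, hi⟩) one_pos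
  · rw [eval_finsetSum, sum_eq_single k, eval_mul, eval_C, eval_nodal, hc k hk]
    · intro i _ hik
      rw [eval_mul, eval_nodal_at_node (mem_erase.2 ⟨Ne.symm hik, hk⟩), mul_zero]
    · exact fun h => absurd hk h

end Lagrange

open Polynomial Lagrange Finset in
theorem sub_one_mul_sum_macdonaldCoeff {F ι : Type*} [Field F] [DecidableEq ι]
    {s : Finset ι} {v : ι → F} (hvs : Set.InjOn v s) (t : F) :
    (t - 1) * ∑ i ∈ s, macdonaldCoeff s v t i = t ^ #s - 1 := by
  rcases s.eq_empty_or_nonempty with rfl | hs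
  · simp
  have hdeg : (jacksonDiff t (nodal s v)).degree < #s := by
    rw [degree_lt_iff_coeff_zero]
    intro m hm
    rw [coeff_jacksonDiff, coeff_eq_zero_of_natDegree_lt (by rw [natDegree_nodal]; omega),
      mul_zero]
  have hlead := coeff_eq_sum hvs hdeg
  rw [coeff_jacksonDiff, Nat.sub_add_cancel hs.card_pos, ← natDegree_nodal (v := v),
    ← leadingCoeff, nodal_monic.leadingCoeff, mul_one, natDegree_nodal] at hlead
  rw [hlead, mul_sum]
  refine sum_congr rfl fun i hi => ?_
  rw [nodal_eq_mul_nodal_erase hi, eval_jacksonDiff_X_sub_C_mul, eval_nodal, macdonaldCoeff,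
    prod_div_distrib, mul_div_assoc]

namespace PowerSeries

open Finset Lagrange

variable {F ι : Type*} [Field F] [DecidableEq ι] {s : Finset ι} {v : ι → F}

theorem C_pow_mul_prod_one_sub_sub_prod_one_sub (hvs : Set.InjOn v s) {t : F} (ht : t ≠ 0) :
    C (t ^ #s) * (∏ j ∈ s, (1 - C (v j) * X) - ∏ j ∈ s, (1 - C (t * v j) * X)) =
      ∑ i ∈ s, C ((t - 1) * macdonaldCoeff s v t i * (t * v i)) * X *
        ∏ j ∈ s.erase i, (1 - C (t * v j) * X) := by
  set a : ι → F⟦X⟧ := fun j => C (v j) * X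
  set b : ι → F⟦X⟧ := fun j => C (t * v j) * X
  have hb : Set.InjOn b s := fun i hi j hj h =>
    hvs hi hj (mul_left_cancel₀ ht (by simpa [b] using congrArg (coeff 1) h))
  have hres : ∀ k ∈ s, (t - 1) * macdonaldCoeff s v t k * (t * v k) *
      ∏ j ∈ s.erase k, (t * v k - t * v j) = t ^ #s * ∏ j ∈ s, (t * v k - v j) := by
    intro k hk
    have hsub : ∀ j ∈ s.erase k, v k - v j ≠ 0 := fun j hj =>
      sub_ne_zero.2 fun h => (ne_of_mem_erase hj) (hvs (mem_of_mem_erase hj) hk h.symm)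
    have hA : macdonaldCoeff s v t k * ∏ j ∈ s.erase k, (v k - v j) =
        ∏ j ∈ s.erase k, (t * v k - v j) := by
      rw [macdonaldCoeff, prod_div_distrib, div_mul_cancel₀ _ (prod_ne_zero_iff.2 hsub)]
    have ht' : ∏ j ∈ s.erase k, (t * v k - t * v j) =
        t ^ (#s - 1) * ∏ j ∈ s.erase k, (v k - v j) := by
      rw [← card_erase_of_mem hk, ← prod_const, ← prod_mul_distrib]
      exact prod_congr rfl fun j _ => by ring
    have hpow : t * t ^ (#s - 1) = t ^ #s := by
      rw [← pow_succ', Nat.sub_add_cancel (card_pos.2 ⟨k, hk⟩)]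
    rw [← mul_prod_erase s _ hk, ht', ← hA, ← hpow]
    ring
  have key := eq_sum_C_mul_nodal_erase hb
    (p := C (t ^ #s) • (nodal s a - nodal s b))
    ((Polynomial.degree_smul_le _ _).trans_lt (degree_nodal_sub_nodal_lt s a b))
    (c := fun i => C ((t - 1) * macdonaldCoeff s v t i * (t * v i)) * X)
    (fun k hk => ?_)
  · have := congrArg (Polynomial.eval 1) key
    simp only [Polynomial.eval_smul, Polynomial.eval_sub, eval_nodal, Polynomial.eval_finsetSum,
      Polynomial.eval_mul, Polynomial.eval_C, smul_eq_mul, a, b] at this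
    rw [this]
  · have hbb : ∀ j ∈ s.erase k, b k - b j = C (t * v k - t * v j) * X := fun j _ => by
      simp only [b, ← sub_mul, ← map_sub]
    have hba : ∀ j ∈ s, b k - a j = C (t * v k - v j) * X := fun j _ => by
      simp only [a, b, ← sub_mul, ← map_sub]
    have hm : #s = #(s.erase k) + 1 := (card_erase_add_one hk).symm
    rw [Polynomial.eval_smul, Polynomial.eval_sub, eval_nodal, eval_nodal_at_node hk, sub_zero,
      prod_congr rfl hbb, prod_congr rfl hba, prod_mul_distrib, prod_mul_distrib, prod_const,
      prod_const, ← map_prod, ← map_prod, smul_eq_mul]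
    have := congrArg (fun r => C r * X ^ #s) (hres k hk)
    rw [hm] at this ⊢
    simp only [map_mul] at this ⊢
    linear_combination this

theorem mk_pow_mul_one_sub_C_mul_X (a : F) : (mk fun n => a ^ n) * (1 - C a * X) = 1 := by
  simpa [rescale_mk, rescale_X] using congrArg (rescale a) (mk_one_mul_one_sub_eq_one F)

theorem coeff_succ_prod_mul_inv_prod (hvs : Set.InjOn v s) {t : F} (ht : t ≠ 0) (m : ℕ) :
    t ^ #s * coeff (m + 1)
        ((∏ j ∈ s, (1 - C (v j) * X)) * (∏ j ∈ s, (1 - C (t * v j) * X))⁻¹) =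
      (t - 1) * ∑ i ∈ s, macdonaldCoeff s v t i * (t * v i) ^ (m + 1) := by
  set P : F⟦X⟧ := ∏ j ∈ s, (1 - C (v j) * X)
  set G : F⟦X⟧ := ∏ j ∈ s, (1 - C (t * v j) * X)
  set c : ι → F := fun i => (t - 1) * macdonaldCoeff s v t i * (t * v i)
  have hG : G * G⁻¹ = 1 := PowerSeries.mul_inv_cancel _ (by simp [G, map_prod])
  have hgeom : ∀ i ∈ s,
      (∏ j ∈ s.erase i, (1 - C (t * v j) * X)) * G⁻¹ = mk fun n => (t * v i) ^ n := by
    intro i hi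
    have hfac : G = (1 - C (t * v i) * X) * ∏ j ∈ s.erase i, (1 - C (t * v j) * X) :=
      (mul_prod_erase s _ hi).symm
    calc (∏ j ∈ s.erase i, (1 - C (t * v j) * X)) * G⁻¹
        = (∏ j ∈ s.erase i, (1 - C (t * v j) * X)) * G⁻¹ *
            ((mk fun n => (t * v i) ^ n) * (1 - C (t * v i) * X)) := by
          rw [mk_pow_mul_one_sub_C_mul_X, mul_one]
      _ = G * G⁻¹ * mk fun n => (t * v i) ^ n := by
          rw [hfac]
          ring
      _ = mk fun n => (t * v i) ^ n := by rw [hG, one_mul]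
  have h : C (t ^ #s) * (P * G⁻¹) - C (t ^ #s) =
      ∑ i ∈ s, C (c i) * X * mk fun n => (t * v i) ^ n :=
    calc C (t ^ #s) * (P * G⁻¹) - C (t ^ #s) = C (t ^ #s) * (P - G) * G⁻¹ := by
          linear_combination C (t ^ #s) * hG
      _ = ∑ i ∈ s, C (c i) * X * ((∏ j ∈ s.erase i, (1 - C (t * v j) * X)) * G⁻¹) := by
          rw [C_pow_mul_prod_one_sub_sub_prod_one_sub hvs ht, sum_mul]
          exact sum_congr rfl fun i _ => mul_assoc _ _ _
      _ = ∑ i ∈ s, C (c i) * X * mk fun n => (t * v i) ^ n :=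
          sum_congr rfl fun i hi => by rw [hgeom i hi]
  have hcoeff := congrArg (coeff (m + 1)) h
  simp only [map_sub, map_sum, coeff_C_mul, coeff_C, mul_assoc, coeff_succ_X_mul, coeff_mk,
    Nat.add_one_ne_zero, if_false, sub_zero] at hcoeff
  rw [hcoeff, mul_sum]
  exact sum_congr rfl fun i _ => by ring

end PowerSeries

open PowerSeries

theorem macdonald_operator_on_power_sum_general {F : Type*} [Field F] {N : ℕ}
    (t : F) (ht0 : t ≠ 0) (ht1 : t ≠ 1) (q : F) (x : Fin N → F)
    (hx : Function.Injective x) (n : ℕ) (hn : 1 ≤ n) :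
    ∑ i : Fin N,
        (∏ j ∈ Finset.univ.erase i, (t * x i - x j) / (x i - x j)) *
          ((∑ k : Fin N, x k ^ n) + (q ^ n - 1) * x i ^ n)
      = (1 - t ^ N) / (1 - t) * (∑ k : Fin N, x k ^ n)
        + t ^ N * (1 - q ^ n) / (t ^ n * (1 - t)) *
            PowerSeries.coeff (R := F) n
              ((∏ i : Fin N, (1 - PowerSeries.C (R := F) (x i) * PowerSeries.X)) *
                (∏ i : Fin N, (1 - PowerSeries.C (R := F) (t * x i) * PowerSeries.X))⁻¹) := by
  obtain ⟨m, rfl⟩ : ∃ m, n = m + 1 := ⟨n - 1, by omega⟩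
  have hsum := sub_one_mul_sum_macdonaldCoeff (s := Finset.univ) hx.injOn t
  have hcoeff := coeff_succ_prod_mul_inv_prod (s := Finset.univ) hx.injOn ht0 m
  rw [Finset.card_univ, Fintype.card_fin] at hsum hcoeff
  set A := macdonaldCoeff Finset.univ x t
  change ∑ i, A i * _ = _
  set p := ∑ k : Fin N, x k ^ (m + 1)
  set Fn := coeff (m + 1) ((∏ i, (1 - C (x i) * X)) * (∏ i, (1 - C (t * x i) * X))⁻¹)
  have hmoment : t ^ N * Fn = (t - 1) * t ^ (m + 1) * ∑ i, A i * x i ^ (m + 1) := by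
    rw [hcoeff, mul_assoc, Finset.mul_sum _ _ (t ^ (m + 1))]
    congr 1
    exact Finset.sum_congr rfl fun i _ => by ring
  have hsplit : ∑ i, A i * (p + (q ^ (m + 1) - 1) * x i ^ (m + 1)) =
      (∑ i, A i) * p + (q ^ (m + 1) - 1) * ∑ i, A i * x i ^ (m + 1) := by
    rw [Finset.sum_mul, Finset.mul_sum, ← Finset.sum_add_distrib]
    exact Finset.sum_congr rfl fun i _ => by ring
  have h1t : 1 - t ≠ 0 := sub_ne_zero.2 ht1.symm
  rw [hsplit, div_mul_eq_mul_div, div_mul_eq_mul_div,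
    div_add_div _ _ h1t (mul_ne_zero (pow_ne_zero _ ht0) h1t), eq_div_iff (mul_ne_zero h1t
      (mul_ne_zero (pow_ne_zero _ ht0) h1t))]
  linear_combination (-(p * t ^ (m + 1) * (1 - t))) * hsum - (1 - q ^ (m + 1)) * (1 - t) * hmoment

/-- Let `F` be a field, `N` a positive integer, `t ∈ F` with `t ≠ 0`,
`t ≠ 1`, `q ∈ F`, and `x₁, …, x_N` pairwise distinct elements of `F`.  With
`A_i = ∏_{j ≠ i} (t·x_i − x_j)/(x_i − x_j)`, `p_n = x₁ⁿ + ⋯ + x_Nⁿ` and `F_n` the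
coefficient of `zⁿ` in `F(z) = ∏ (1 − z·x_i) · ∏ (1 − t·z·x_i)⁻¹`, the Macdonald operator
`δ₁ = ∑ A_i ∂_i^{(q)}` applied to `p_n` satisfies, for every `n ≥ 1`:
`∑_{i=1}^N A_i·(p_n + (qⁿ − 1)·x_iⁿ)
  = ((1 − t^N)/(1 − t))·p_n + (t^N·(1 − qⁿ)/(tⁿ·(1 − t)))·F_n`. -/
theorem macdonald_operator_on_power_sum {F : Type*} [Field F] {N : ℕ} (hN : 0 < N)
    (t : F) (ht0 : t ≠ 0) (ht1 : t ≠ 1) (q : F) (x : Fin N → F)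
    (hx : Function.Injective x) (n : ℕ) (hn : 1 ≤ n) :
    ∑ i : Fin N,
        (∏ j ∈ Finset.univ.erase i, (t * x i - x j) / (x i - x j)) *
          ((∑ k : Fin N, x k ^ n) + (q ^ n - 1) * x i ^ n)
      = (1 - t ^ N) / (1 - t) * (∑ k : Fin N, x k ^ n)
        + t ^ N * (1 - q ^ n) / (t ^ n * (1 - t)) *
            PowerSeries.coeff (R := F) n
              ((∏ i : Fin N, (1 - PowerSeries.C (R := F) (x i) * PowerSeries.X)) *
                (∏ i : Fin N, (1 - PowerSeries.C (R := F) (t * x i) * PowerSeries.X))⁻¹) :=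
  macdonald_operator_on_power_sum_general t ht0 ht1 q x hx n hn
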